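/- arXiv:2303.13021 — 3 statements merged into one kernel-verified Lean document; each statement's English description precedes it below -/
import Mathlib

section
/- For any λ ∈ ℝ, α ≥ 0, γ₀ > 1/2, and D > 0, there exists a constant C > 0 such that for all t ≥ 0 and x ∈ ℝ, ∫_ℝ (1+t)^{-α} e^{-|x - y - λ t|²/(D(1+t))} (1 + |y|²)^{-γ₀} dy ≤ C (1+t)^{-α} (1 + |x - λ t|²/(1+t))^{-γ₀}. -/
/-!
Put s = 1 + t and z = x - λt; the factor (1 + t)^(-α) comes out, and it remains to bound
∫ exp(-(z - y)²/(Ds)) (1 + y²)^(-γ) dy by C (1 + z²/s)^(-γ) for s ≥ 1.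
If z² ≤ s, the weight (1 + z²/s)^(-γ) is at least 2^(-γ), and the integral is at most
∫ (1 + y²)^(-γ) < ∞ since 2γ > 1.
If z² ≥ s, each y has |y| ≥ |z|/2 or |z - y| ≥ |z|/2. The first region costs
(1 + z²/4)^(-γ) times the Gaussian mass √(πDs), and √s ≤ s^γ is absorbed by
(1 + z²/s)^γ ≤ (2z²/s)^γ; on the second the Gaussian is at most exp(-z²/(4Ds)), which
decays faster than any power of 1 + z²/s.
-/

open MeasureTheory Real

lemma integrable_one_add_sq_rpow_neg {γ : ℝ} (hγ : 1 / 2 < γ) :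
    Integrable fun y : ℝ => (1 + y ^ 2) ^ (-γ) := by
  refine (integrable_rpow_neg_one_add_norm_sq (E := ℝ) (μ := volume) (r := 2 * γ)
    (by simp; linarith)).congr (.of_forall fun y => ?_)
  simp only [norm_eq_abs, sq_abs]
  ring_nf

lemma integrable_exp_neg_sub_sq_div {b : ℝ} (hb : 0 < b) (z : ℝ) :
    Integrable fun y : ℝ => exp (-(z - y) ^ 2 / b) :=
  ((integrable_exp_neg_mul_sq (inv_pos.2 hb)).comp_sub_left z).congr
    (.of_forall fun y => by ring_nf)

lemma integral_exp_neg_sub_sq_div (b z : ℝ) :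
    ∫ y : ℝ, exp (-(z - y) ^ 2 / b) = √(π * b) := by
  have h (y : ℝ) : -(z - y) ^ 2 / b = -b⁻¹ * (z - y) ^ 2 := by ring
  simp only [h]
  rw [integral_sub_left_eq_self (fun x : ℝ => exp (-b⁻¹ * x ^ 2)), integral_gaussian,
    div_inv_eq_mul]

lemma exists_exp_neg_mul_le_rpow_neg {a : ℝ} (ha : 0 < a) (γ : ℝ) :
    ∃ c > 0, ∀ u ≥ (0 : ℝ), exp (-(a * u)) ≤ c * (1 + u) ^ (-γ) := by
  set n := ⌈γ⌉₊
  refine ⟨exp a * n.factorial / a ^ n, by positivity, fun u hu => ?_⟩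
  set w := 1 + u
  have hw : 1 ≤ w := by linarith
  have hfact : (a * w) ^ n * exp (-(a * w)) ≤ n.factorial := by
    have := pow_div_factorial_le_exp _ (mul_nonneg ha.le (by linarith : (0:ℝ) ≤ w)) n
    rw [div_le_iff₀ (by positivity)] at this
    rw [exp_neg, ← div_eq_mul_inv, div_le_iff₀ (exp_pos _)]
    linarith
  rw [rpow_neg (by linarith), ← div_eq_mul_inv, le_div_iff₀ (by positivity)]
  calc exp (-(a * u)) * w ^ γ ≤ exp (-(a * u)) * w ^ (n : ℝ) := by
        gcongr
        exact Nat.le_ceil γ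
    _ = exp a / a ^ n * ((a * w) ^ n * exp (-(a * w))) := by
        rw [rpow_natCast, mul_pow, show -(a * u) = a + -(a * w) by ring, exp_add]
        field_simp
    _ ≤ exp a / a ^ n * n.factorial := by gcongr
    _ = exp a * n.factorial / a ^ n := by ring

lemma exp_neg_sq_div_mul_rpow_neg_le_add {b γ : ℝ} (hb : 0 ≤ b) (hγ : 0 ≤ γ) (y z : ℝ) :
    exp (-(z - y) ^ 2 / b) * (1 + y ^ 2) ^ (-γ) ≤
      (1 + z ^ 2 / 4) ^ (-γ) * exp (-(z - y) ^ 2 / b) +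
        exp (-(z ^ 2 / 4) / b) * (1 + y ^ 2) ^ (-γ) := by
  rcases le_total (z ^ 2 / 4) (y ^ 2) with hy | hy
  · have h : (1 + y ^ 2) ^ (-γ) ≤ (1 + z ^ 2 / 4) ^ (-γ) :=
      rpow_le_rpow_of_nonpos (by positivity) (by linarith) (by linarith)
    exact le_add_of_le_of_nonneg (by rw [mul_comm]; gcongr) (by positivity)
  · have h : exp (-(z - y) ^ 2 / b) ≤ exp (-(z ^ 2 / 4) / b) := by
      gcongr
      nlinarith [sq_abs y, sq_abs z, abs_nonneg y, abs_sub_abs_le_abs_sub z y]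
    exact le_add_of_nonneg_of_le (by positivity) (by gcongr)

lemma sqrt_mul_rpow_neg_le {s v γ : ℝ} (hs : 1 ≤ s) (hsv : s ≤ v) (hγ : 1 / 2 ≤ γ) :
    √s * (1 + v / 4) ^ (-γ) ≤ 8 ^ γ * (1 + v / s) ^ (-γ) := by
  have hs0 : 0 < s := by linarith
  have hv : 0 ≤ v := by linarith
  rw [rpow_neg (by positivity), rpow_neg (by positivity), ← div_eq_mul_inv, ← div_eq_mul_inv,
    div_le_div_iff₀ (by positivity) (by positivity)]
  calc √s * (1 + v / s) ^ γ ≤ s ^ γ * (2 * v / s) ^ γ := by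
        gcongr
        · rw [sqrt_eq_rpow]; exact rpow_le_rpow_of_exponent_le hs hγ
        · rw [add_div' _ _ _ hs0.ne']; gcongr; linarith
    _ = (2 * v) ^ γ := by rw [← mul_rpow hs0.le (by positivity)]; field_simp
    _ ≤ (8 * (1 + v / 4)) ^ γ := rpow_le_rpow (by positivity) (by linarith) (by linarith)
    _ = 8 ^ γ * (1 + v / 4) ^ γ := mul_rpow (by norm_num) (by positivity)

lemma integral_exp_neg_sq_div_mul_rpow_neg_le {b γ : ℝ} (hb : 0 ≤ b) (hγ : 1 / 2 < γ)
    (z : ℝ) :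
    ∫ y : ℝ, exp (-(z - y) ^ 2 / b) * (1 + y ^ 2) ^ (-γ) ≤
      ∫ y : ℝ, (1 + y ^ 2) ^ (-γ) :=
  integral_mono_of_nonneg (.of_forall fun y => by positivity)
    (integrable_one_add_sq_rpow_neg hγ) (.of_forall fun y =>
      mul_le_of_le_one_left (by positivity) (exp_le_one_iff.2
        (div_nonpos_of_nonpos_of_nonneg (neg_nonpos.2 (sq_nonneg _)) hb)))

lemma integral_exp_neg_sq_div_mul_rpow_neg_le_add {b γ : ℝ} (hb : 0 < b) (hγ : 1 / 2 < γ)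
    (z : ℝ) :
    ∫ y : ℝ, exp (-(z - y) ^ 2 / b) * (1 + y ^ 2) ^ (-γ) ≤
      √(π * b) * (1 + z ^ 2 / 4) ^ (-γ) +
        exp (-(z ^ 2 / 4) / b) * ∫ y : ℝ, (1 + y ^ 2) ^ (-γ) := by
  have hgauss := (integrable_exp_neg_sub_sq_div hb z).const_mul ((1 + z ^ 2 / 4) ^ (-γ))
  have hg := (integrable_one_add_sq_rpow_neg hγ).const_mul (exp (-(z ^ 2 / 4) / b))
  calc _ ≤ ∫ y, ((1 + z ^ 2 / 4) ^ (-γ) * exp (-(z - y) ^ 2 / b) +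
        exp (-(z ^ 2 / 4) / b) * (1 + y ^ 2) ^ (-γ)) :=
        integral_mono_of_nonneg (.of_forall fun y => by positivity) (hgauss.add hg)
          (.of_forall fun y => exp_neg_sq_div_mul_rpow_neg_le_add hb.le (by linarith) y z)
    _ = _ := by
        rw [integral_add hgauss hg, integral_const_mul, integral_const_mul,
          integral_exp_neg_sub_sq_div, mul_comm]

lemma exists_integral_exp_mul_rpow_neg_le {γ D : ℝ} (hγ : 1 / 2 < γ) (hD : 0 < D) :
    ∃ C > 0, ∀ s ≥ (1 : ℝ), ∀ z : ℝ,
      ∫ y : ℝ, exp (-(z - y) ^ 2 / (D * s)) * (1 + y ^ 2) ^ (-γ) ≤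
        C * (1 + z ^ 2 / s) ^ (-γ) := by
  obtain ⟨c, hc, hexp⟩ := exists_exp_neg_mul_le_rpow_neg (inv_pos.2 (mul_pos four_pos hD)) γ
  set M := ∫ y : ℝ, (1 + y ^ 2) ^ (-γ)
  have hM : 0 ≤ M := integral_nonneg fun y => by positivity
  refine ⟨2 ^ γ * M + 8 ^ γ * √(π * D) + c * M, by positivity, fun s hs z => ?_⟩
  have hs0 : 0 < s := by linarith
  have hR : 0 ≤ (1 + z ^ 2 / s) ^ (-γ) := by positivity
  rcases le_total (z ^ 2) s with hzs | hsz
  · have hlow : 1 ≤ 2 ^ γ * (1 + z ^ 2 / s) ^ (-γ) := by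
      have : (2 : ℝ) ^ (-γ) ≤ (1 + z ^ 2 / s) ^ (-γ) :=
        rpow_le_rpow_of_nonpos (by positivity) (by linarith [(div_le_one hs0).2 hzs])
          (by linarith)
      calc (1 : ℝ) = 2 ^ γ * 2 ^ (-γ) := by rw [← rpow_add two_pos, add_neg_cancel, rpow_zero]
        _ ≤ _ := by gcongr
    calc _ ≤ M := integral_exp_neg_sq_div_mul_rpow_neg_le (by positivity) hγ z
      _ ≤ 2 ^ γ * M * (1 + z ^ 2 / s) ^ (-γ) := by nlinarith
      _ ≤ _ := by
          gcongr
          linarith [show 0 ≤ 8 ^ γ * √(π * D) + c * M by positivity]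
  · have hexp' : exp (-(z ^ 2 / 4) / (D * s)) ≤ c * (1 + z ^ 2 / s) ^ (-γ) := by
      convert hexp (z ^ 2 / s) (by positivity) using 2
      field_simp
    calc _ ≤ √(π * D) * (√s * (1 + z ^ 2 / 4) ^ (-γ)) +
          exp (-(z ^ 2 / 4) / (D * s)) * M := by
          rw [← mul_assoc, ← sqrt_mul (by positivity), mul_assoc π]
          exact integral_exp_neg_sq_div_mul_rpow_neg_le_add (by positivity) hγ z
      _ ≤ √(π * D) * (8 ^ γ * (1 + z ^ 2 / s) ^ (-γ)) + c * (1 + z ^ 2 / s) ^ (-γ) * M := by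
          gcongr √(π * D) * ?_ + ?_ * M
          exact sqrt_mul_rpow_neg_le hs hsz hγ.le
      _ ≤ _ := by nlinarith [mul_nonneg (mul_nonneg (rpow_nonneg zero_le_two γ) hM) hR]

theorem stmt1_general (lam α γ₀ D : ℝ) (hγ₀ : 1 / 2 < γ₀) (hD : 0 < D) :
    ∃ C > (0:ℝ), ∀ t ≥ (0:ℝ), ∀ x : ℝ,
      (∫ y : ℝ, (1 + t) ^ (-α) * Real.exp (-(x - y - lam * t) ^ 2 / (D * (1 + t)))
          * (1 + y ^ 2) ^ (-γ₀))
        ≤ C * (1 + t) ^ (-α) * (1 + (x - lam * t) ^ 2 / (1 + t)) ^ (-γ₀) := by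
  obtain ⟨C, hC, hbound⟩ := exists_integral_exp_mul_rpow_neg_le hγ₀ hD
  refine ⟨C, hC, fun t ht x => ?_⟩
  calc _ = (1 + t) ^ (-α) *
        ∫ y : ℝ, exp (-(x - lam * t - y) ^ 2 / (D * (1 + t))) * (1 + y ^ 2) ^ (-γ₀) := by
        simp only [mul_assoc, sub_right_comm x _ (lam * t), integral_const_mul]
    _ ≤ (1 + t) ^ (-α) * (C * (1 + (x - lam * t) ^ 2 / (1 + t)) ^ (-γ₀)) := by
        gcongr
        exact hbound (1 + t) (by linarith) (x - lam * t)
    _ = _ := by ring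

theorem stmt1 (lam α γ₀ D : ℝ) (hα : 0 ≤ α) (hγ₀ : 1 / 2 < γ₀) (hD : 0 < D) :
    ∃ C > (0:ℝ), ∀ t ≥ (0:ℝ), ∀ x : ℝ,
      (∫ y : ℝ, (1 + t) ^ (-α) * Real.exp (-(x - y - lam * t) ^ 2 / (D * (1 + t)))
          * (1 + y ^ 2) ^ (-γ₀))
        ≤ C * (1 + t) ^ (-α) * (1 + (x - lam * t) ^ 2 / (1 + t)) ^ (-γ₀) :=
  stmt1_general lam α γ₀ D hγ₀ hD
end

section
/- For any β ≥ 0, γ ≥ 0, λ ∈ ℝ and D > 0, there exists a constant C > 0 such that for all t ≥ 0 and x ∈ ℝ, ∫₀^t ∫_ℝ e^{-(|x-y| + (t-s))/D} (1+s)^{-β} (1 + |y - λ s|²/(1+s))^{-γ} dy ds ≤ C (1+t)^{-β} (1 + |x - λ t|²/(1+t))^{-γ}. -/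
/-! The weight `w(s, y) = (1 + s)^{-β} B_γ(s, y - λ s)` (`diffusiveWave`) satisfies a Peetre-type
inequality: for `0 ≤ s ≤ t`, `w(s, y) ≤ c (1 + |x - y| + (t - s))^{β + 2γ} w(t, x)`, because
`(1 + t)/(1 + s) ≤ 1 + (t - s)` and `x - λ t` differs from `y - λ s` by at most
`(1 + |λ|)(|x - y| + (t - s))`. Half of the exponential decay of the kernel absorbs this polynomial
factor, and what is left, `e^{-(|x - y| + (t - s))/(2D)}`, has integral at most `4D · 2D` over
`(0, t) × ℝ`. -/

open MeasureTheory Real Set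

lemma one_add_rpow_le_mul_exp {p ε r : ℝ} (hp : 0 ≤ p) (hε : 0 < ε) (hr : 0 ≤ r) :
    (1 + r) ^ p ≤ (1 + p / ε) ^ p * exp (ε * r) := by
  set c := 1 + p / ε
  have hc : 1 ≤ c := le_add_of_nonneg_right (by positivity)
  have hc0 : 0 < c := by linarith
  have hbase : 1 + r ≤ c * exp (r / c) := by
    calc 1 + r ≤ c * (r / c + 1) := by rw [mul_add, mul_div_cancel₀ _ hc0.ne']; linarith
      _ ≤ c * exp (r / c) := by gcongr; exact add_one_le_exp _
  have hpc : p / c ≤ ε := by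
    rw [div_le_iff₀ hc0]; simp only [c, mul_add, mul_div_cancel₀ _ hε.ne']; linarith
  calc (1 + r) ^ p ≤ (c * exp (r / c)) ^ p := rpow_le_rpow (by linarith) hbase hp
    _ = c ^ p * exp (p / c * r) := by
        rw [mul_rpow hc0.le (exp_pos _).le, ← exp_mul]; ring_nf
    _ ≤ c ^ p * exp (ε * r) := by gcongr

lemma rpow_neg_le_mul_rpow_neg {a b k γ : ℝ} (hγ : 0 ≤ γ) (ha : 0 < a) (hb : 0 < b)
    (h : a ≤ k * b) : b ^ (-γ) ≤ k ^ γ * a ^ (-γ) := by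
  have hk : 0 < k := pos_of_mul_pos_left (ha.trans_le h) hb.le
  calc b ^ (-γ) = k ^ γ * (k * b) ^ (-γ) := by
        rw [mul_rpow hk.le hb.le, rpow_neg hk.le, ← mul_assoc,
          mul_inv_cancel₀ (rpow_pos_of_pos hk γ).ne', one_mul]
    _ ≤ k ^ γ * a ^ (-γ) :=
        mul_le_mul_of_nonneg_left (rpow_le_rpow_of_nonpos ha h (neg_nonpos.2 hγ)) (by positivity)

lemma one_add_sq_div_le {m n a d : ℝ} (hm : 0 < m) (hmn : m ≤ n) :
    1 + (a + d) ^ 2 / n ≤ 2 * (1 + d ^ 2 / n) * (1 + a ^ 2 / m) := by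
  have hn : 0 < n := hm.trans_le hmn
  have hsq : (a + d) ^ 2 / n ≤ 2 * (a ^ 2 / m) + 2 * (d ^ 2 / n) := by
    calc (a + d) ^ 2 / n ≤ (2 * a ^ 2 + 2 * d ^ 2) / n := by
          gcongr; nlinarith [sq_nonneg (a - d)]
      _ = 2 * (a ^ 2 / n) + 2 * (d ^ 2 / n) := by ring
      _ ≤ 2 * (a ^ 2 / m) + 2 * (d ^ 2 / n) := by gcongr
  have : 0 ≤ d ^ 2 / n * (a ^ 2 / m) := by positivity
  nlinarith

lemma integral_exp_neg_abs_div {D : ℝ} (hD : 0 < D) :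
    ∫ y, exp (-|y| / D) = 2 * D := by
  rw [integral_comp_abs (f := fun y => exp (-y / D))]
  have h := integral_exp_mul_Ioi (a := -D⁻¹) (by simpa using hD) 0
  simp only [mul_zero, exp_zero] at h
  simp_rw [neg_div, div_eq_inv_mul, ← neg_mul, h]
  field_simp

lemma integral_exp_sub_div_le {D t : ℝ} (hD : 0 < D) :
    ∫ s in (0:ℝ)..t, exp (-(t - s) / D) ≤ D := by
  have h := intervalIntegral.integral_comp_div_sub exp (a := 0) (b := t) hD.ne' (t / D)
  simp only [zero_div, zero_sub, sub_self, integral_exp, exp_zero, smul_eq_mul] at h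
  have hexp : ∀ s, -(t - s) / D = s / D - t / D := fun s => by ring
  simp_rw [hexp, h]
  nlinarith [exp_pos (-(t / D))]

lemma integrable_exp_neg_abs_div {D : ℝ} (hD : 0 < D) :
    Integrable fun y : ℝ => exp (-|y| / D) :=
  -- `integral_comp_abs` holds without integrability, so a nonzero value forces it
  .of_integral_ne_zero <| by rw [integral_exp_neg_abs_div hD]; positivity

lemma one_add_sq_div_pos {m : ℝ} (hm : 0 ≤ m) (a : ℝ) : 0 < 1 + a ^ 2 / m := by
  positivity

noncomputable def diffusiveWave (β γ lam s y : ℝ) : ℝ :=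
  (1 + s) ^ (-β) * (1 + (y - lam * s) ^ 2 / (1 + s)) ^ (-γ)

lemma diffusiveWave_nonneg (β γ lam : ℝ) {s : ℝ} (hs : 0 ≤ 1 + s) (y : ℝ) :
    0 ≤ diffusiveWave β γ lam s y :=
  mul_nonneg (rpow_nonneg hs _) (rpow_nonneg (one_add_sq_div_pos hs _).le _)

section Peetre

variable {β γ lam s t : ℝ}

lemma one_add_rpow_neg_le (hβ : 0 ≤ β) (hs : 0 ≤ s) (hst : s ≤ t) :
    (1 + s) ^ (-β) ≤ (1 + (t - s)) ^ β * (1 + t) ^ (-β) :=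
  rpow_neg_le_mul_rpow_neg hβ (by linarith) (by linarith) (by nlinarith)

lemma diffusiveProfile_le (hγ : 0 ≤ γ) (hs : 0 ≤ s) (hst : s ≤ t) (x y : ℝ) :
    (1 + (y - lam * s) ^ 2 / (1 + s)) ^ (-γ) ≤ (2 * (1 + |lam|) ^ 2) ^ γ
      * (1 + (|x - y| + (t - s))) ^ (2 * γ) * (1 + (x - lam * t) ^ 2 / (1 + t)) ^ (-γ) := by
  set r := |x - y| + (t - s)
  set d := (x - y) - lam * (t - s)
  have hd : 1 + |d| ≤ (1 + |lam|) * (1 + r) := by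
    have := abs_sub (x - y) (lam * (t - s))
    rw [abs_mul, abs_of_nonneg (sub_nonneg.2 hst)] at this
    nlinarith [abs_nonneg lam, abs_nonneg (x - y), sub_nonneg.2 hst]
  have hd2 : 1 + d ^ 2 / (1 + t) ≤ ((1 + |lam|) * (1 + r)) ^ 2 := by
    calc 1 + d ^ 2 / (1 + t) ≤ 1 + d ^ 2 := by
          gcongr; exact div_le_self (sq_nonneg d) (by linarith)
      _ ≤ (1 + |d|) ^ 2 := by nlinarith [sq_abs d, abs_nonneg d]
      _ ≤ ((1 + |lam|) * (1 + r)) ^ 2 := by gcongr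
  have hbase : 1 + (x - lam * t) ^ 2 / (1 + t)
      ≤ 2 * (1 + |lam|) ^ 2 * (1 + r) ^ 2 * (1 + (y - lam * s) ^ 2 / (1 + s)) := by
    have h := one_add_sq_div_le (a := y - lam * s) (d := d) (by linarith : 0 < 1 + s)
      (by linarith : 1 + s ≤ 1 + t)
    rw [show y - lam * s + d = x - lam * t by ring] at h
    have hP := (one_add_sq_div_pos (by linarith : 0 ≤ 1 + s) (y - lam * s)).le
    calc _ ≤ 2 * (1 + d ^ 2 / (1 + t)) * (1 + (y - lam * s) ^ 2 / (1 + s)) := h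
      _ ≤ 2 * ((1 + |lam|) * (1 + r)) ^ 2 * (1 + (y - lam * s) ^ 2 / (1 + s)) := by gcongr
      _ = _ := by ring
  have hr : 0 ≤ 1 + r := by positivity
  calc _ ≤ (2 * (1 + |lam|) ^ 2 * (1 + r) ^ 2) ^ γ * (1 + (x - lam * t) ^ 2 / (1 + t)) ^ (-γ) :=
        rpow_neg_le_mul_rpow_neg hγ (one_add_sq_div_pos (by linarith) _)
          (one_add_sq_div_pos (by linarith) _) hbase
    _ = _ := by
        rw [mul_rpow (by positivity) (by positivity), ← rpow_natCast (1 + r) 2,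
          ← rpow_mul hr, Nat.cast_ofNat]

lemma diffusiveWave_le (hβ : 0 ≤ β) (hγ : 0 ≤ γ) (hs : 0 ≤ s) (hst : s ≤ t) (x y : ℝ) :
    diffusiveWave β γ lam s y ≤ (2 * (1 + |lam|) ^ 2) ^ γ
      * (1 + (|x - y| + (t - s))) ^ (β + 2 * γ) * diffusiveWave β γ lam t x := by
  have hr : 0 < 1 + (|x - y| + (t - s)) := by linarith [abs_nonneg (x - y)]
  have htime : (1 + s) ^ (-β) ≤ (1 + (|x - y| + (t - s))) ^ β * (1 + t) ^ (-β) :=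
    (one_add_rpow_neg_le hβ hs hst).trans <| by
      gcongr
      · exact rpow_nonneg (by linarith) _
      · linarith [abs_nonneg (x - y)]
  calc diffusiveWave β γ lam s y
      ≤ ((1 + (|x - y| + (t - s))) ^ β * (1 + t) ^ (-β)) * ((2 * (1 + |lam|) ^ 2) ^ γ
        * (1 + (|x - y| + (t - s))) ^ (2 * γ) * (1 + (x - lam * t) ^ 2 / (1 + t)) ^ (-γ)) :=
        mul_le_mul htime (diffusiveProfile_le hγ hs hst x y)
          (rpow_nonneg (one_add_sq_div_pos (by linarith) _).le _)
          (mul_nonneg (rpow_nonneg hr.le _) (rpow_nonneg (by linarith) _))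
    _ = _ := by rw [diffusiveWave, rpow_add hr]; ring

end Peetre

lemma exp_neg_div_mul_rpow_le {D k r : ℝ} (hD : 0 < D) (hk : 0 ≤ k) (hr : 0 ≤ r) :
    exp (-r / D) * (1 + r) ^ k ≤ (1 + 2 * D * k) ^ k * exp (-r / (2 * D)) := by
  have h := one_add_rpow_le_mul_exp hk (inv_pos.2 (mul_pos two_pos hD)) hr
  rw [div_inv_eq_mul, mul_comm k] at h
  calc exp (-r / D) * (1 + r) ^ k
      ≤ exp (-r / D) * ((1 + 2 * D * k) ^ k * exp ((2 * D)⁻¹ * r)) := by gcongr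
    _ = (1 + 2 * D * k) ^ k * exp (-r / (2 * D)) := by
        rw [mul_left_comm, ← exp_add]; congr 2; field_simp; ring

lemma exp_mul_diffusiveWave_le {β γ lam D s t : ℝ} (hβ : 0 ≤ β) (hγ : 0 ≤ γ) (hD : 0 < D)
    (hs : 0 ≤ s) (hst : s ≤ t) (x y : ℝ) :
    exp (-(|x - y| + (t - s)) / D) * diffusiveWave β γ lam s y
      ≤ (2 * (1 + |lam|) ^ 2) ^ γ * (1 + 2 * D * (β + 2 * γ)) ^ (β + 2 * γ)
        * diffusiveWave β γ lam t x * (exp (-|x - y| / (2 * D)) * exp (-(t - s) / (2 * D))) := by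
  set r := |x - y| + (t - s)
  have hr : 0 ≤ r := by linarith [abs_nonneg (x - y)]
  have hW := diffusiveWave_nonneg β γ lam (by linarith : 0 ≤ 1 + t) x
  calc exp (-r / D) * diffusiveWave β γ lam s y
      ≤ exp (-r / D) * ((2 * (1 + |lam|) ^ 2) ^ γ * (1 + r) ^ (β + 2 * γ)
        * diffusiveWave β γ lam t x) := by gcongr; exact diffusiveWave_le hβ hγ hs hst x y
    _ = (2 * (1 + |lam|) ^ 2) ^ γ * diffusiveWave β γ lam t x
        * (exp (-r / D) * (1 + r) ^ (β + 2 * γ)) := by ring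
    _ ≤ (2 * (1 + |lam|) ^ 2) ^ γ * diffusiveWave β γ lam t x
        * ((1 + 2 * D * (β + 2 * γ)) ^ (β + 2 * γ) * exp (-r / (2 * D))) :=
        mul_le_mul_of_nonneg_left (exp_neg_div_mul_rpow_le hD (by positivity) hr)
          (mul_nonneg (by positivity) hW)
    _ = _ := by
        rw [show -r / (2 * D) = -|x - y| / (2 * D) + -(t - s) / (2 * D) by ring, exp_add]; ring

lemma integral_integral_le_of_le_exp_kernel {f : ℝ → ℝ → ℝ} {D K t x : ℝ} (hD : 0 < D)
    (ht : 0 ≤ t) (hK : 0 ≤ K) (hf_nonneg : ∀ s ∈ Ioc 0 t, ∀ y, 0 ≤ f s y)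
    (hf_le : ∀ s ∈ Ioc 0 t, ∀ y, f s y ≤ K * (exp (-|x - y| / D) * exp (-(t - s) / D))) :
    ∫ s in (0:ℝ)..t, ∫ y, f s y ≤ K * (2 * D) * D := by
  have hinner : ∀ s ∈ Ioc 0 t, ∫ y, f s y ≤ K * (2 * D) * exp (-(t - s) / D) := by
    intro s hs
    have hint : Integrable fun y => K * (exp (-|x - y| / D) * exp (-(t - s) / D)) :=
      (((integrable_exp_neg_abs_div hD).comp_sub_left x).mul_const _).const_mul K
    calc ∫ y, f s y ≤ ∫ y, K * (exp (-|x - y| / D) * exp (-(t - s) / D)) :=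
          integral_mono_of_nonneg (.of_forall (hf_nonneg s hs)) hint (.of_forall (hf_le s hs))
      _ = K * (2 * D) * exp (-(t - s) / D) := by
          rw [integral_const_mul, integral_mul_const,
            integral_sub_left_eq_self (fun y => exp (-|y| / D)), integral_exp_neg_abs_div hD]
          ring
  rw [intervalIntegral.integral_of_le ht]
  calc ∫ s in Ioc 0 t, ∫ y, f s y ≤ ∫ s in Ioc 0 t, K * (2 * D) * exp (-(t - s) / D) :=
        integral_mono_of_nonneg
          (ae_restrict_of_forall_mem measurableSet_Ioc fun s hs => integral_nonneg (hf_nonneg s hs))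
          (Continuous.integrableOn_Ioc (by fun_prop))
          (ae_restrict_of_forall_mem measurableSet_Ioc hinner)
    _ = K * (2 * D) * ∫ s in (0:ℝ)..t, exp (-(t - s) / D) := by
        rw [integral_const_mul, intervalIntegral.integral_of_le ht]
    _ ≤ K * (2 * D) * D := mul_le_mul_of_nonneg_left (integral_exp_sub_div_le hD) (by positivity)

theorem stmt2 (β γ lam D : ℝ) (hβ : 0 ≤ β) (hγ : 0 ≤ γ) (hD : 0 < D) :
    ∃ C > (0:ℝ), ∀ t ≥ (0:ℝ), ∀ x : ℝ,
      (∫ s in (0:ℝ)..t, ∫ y : ℝ,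
          Real.exp (-(|x - y| + (t - s)) / D) * (1 + s) ^ (-β)
            * (1 + (y - lam * s) ^ 2 / (1 + s)) ^ (-γ))
        ≤ C * (1 + t) ^ (-β) * (1 + (x - lam * t) ^ 2 / (1 + t)) ^ (-γ) := by
  set c := (2 * (1 + |lam|) ^ 2) ^ γ * (1 + 2 * D * (β + 2 * γ)) ^ (β + 2 * γ)
  refine ⟨c * (2 * (2 * D)) * (2 * D), by positivity, fun t ht x => ?_⟩
  have h := integral_integral_le_of_le_exp_kernel (x := x) (K := c * diffusiveWave β γ lam t x)
    (f := fun s y => exp (-(|x - y| + (t - s)) / D) * diffusiveWave β γ lam s y)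
    (by positivity : 0 < 2 * D) ht
    (mul_nonneg (by positivity) (diffusiveWave_nonneg β γ lam (by linarith) x))
    (fun s hs y => mul_nonneg (exp_pos _).le (diffusiveWave_nonneg β γ lam (by linarith [hs.1]) y))
    (fun s hs y => exp_mul_diffusiveWave_le hβ hγ hD hs.1.le hs.2 x y)
  simp only [diffusiveWave, ← mul_assoc] at h
  linarith
end

section
/- Let g₀ : ℝ × ℝ³ → ℝ satisfy sup_v (1+|v|)^β |g₀(x,v)| ≤ C (1+|x|²)^{-γ} with γ > 0, let S^t g(x,v) = e^{-ν(v)t} g(x - v₁ t, v) with ν(v) ≥ ν₀(1+|v|), and define J₀(t) = S^t g₀ and, for an operator T bounded from L^∞_{v,β}-weighted decay to itself in the sense ‖T h(x)‖_{L^∞_{v,β}} ≤ C₀ ‖h(x)‖_{L^∞_{v,β}} pointwise in x up to convolution with e^{-|x|}, J_k(t) = ∫₀^t S^{t-s} T J_{k-1}(s) ds. Then for each k ≥ 0 there is C_k such that sup_v (1+|v|)^β |J_k(t,x,v)| ≤ C_k t^k e^{-2ν₀ t/3} (1+|x|²)^{-γ}. -/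
/-!
Free transport over a time `τ` shifts `x` by at most `|v| τ`; by Peetre's inequality this costs
a factor `(1 + |v|² τ²)^γ ≲ exp (ν₀ |v| τ)` in the weight `(1 + x²)^(-γ)`, which the damping
`exp (-ν(v) τ) ≤ exp (-ν₀ (1 + |v|) τ)` absorbs, leaving `exp (-ν₀ τ)`. Peetre's inequality also
shows that convolution with `exp (-|x|)` preserves `(1 + x²)^(-γ)`, so `T` does. Hence the Duhamel
integral of a bound `C s^k exp (-ν₀ s) (1 + x²)^(-γ)` is at most
`C' t^(k+1) exp (-ν₀ t) (1 + x²)^(-γ)`, and `exp (-ν₀ t) ≤ exp (-2 ν₀ t / 3)`.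
-/

open MeasureTheory Real

lemma one_add_sq_rpow_le_mul_exp_abs {p μ : ℝ} (hp : 0 ≤ p) (hμ : 0 < μ) :
    ∃ c > 0, ∀ u : ℝ, (1 + u ^ 2) ^ p ≤ c * exp (μ * |u|) := by
  -- `ε (1 + |u|) ≤ exp (ε |u|)` for `ε ≤ 1`, and `ε` is small enough that `2 p ε ≤ μ`.
  set ε : ℝ := min 1 (μ / (2 * p + 1))
  have hε : 0 < ε := lt_min one_pos (by positivity)
  have hεμ : 2 * p * ε ≤ μ := by
    have h : ε * (2 * p + 1) ≤ μ := (le_div_iff₀ (by positivity)).1 (min_le_right _ _)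
    nlinarith
  refine ⟨ε ^ (-(2 * p)), by positivity, fun u => ?_⟩
  have hlin : 1 + |u| ≤ exp (ε * |u|) / ε := by
    rw [le_div_iff₀ hε]
    nlinarith [add_one_le_exp (ε * |u|), min_le_left 1 (μ / (2 * p + 1)), abs_nonneg u]
  calc (1 + u ^ 2) ^ p ≤ ((1 + |u|) ^ 2) ^ p :=
        rpow_le_rpow (by positivity) (by nlinarith [sq_abs u, abs_nonneg u]) hp
    _ = (1 + |u|) ^ (2 * p) := by rw [← rpow_natCast, ← rpow_mul (by positivity)]; norm_num
    _ ≤ (exp (ε * |u|) / ε) ^ (2 * p) := rpow_le_rpow (by positivity) hlin (by positivity)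
    _ = ε ^ (-(2 * p)) * exp (2 * p * ε * |u|) := by
        rw [div_rpow (exp_nonneg _) hε.le, ← exp_mul, rpow_neg hε.le]; ring_nf
    _ ≤ ε ^ (-(2 * p)) * exp (μ * |u|) := by gcongr

lemma one_add_sq_sub_rpow_neg_le {γ : ℝ} (hγ : 0 ≤ γ) (x a : ℝ) :
    (1 + (x - a) ^ 2) ^ (-γ) ≤ 2 ^ γ * (1 + a ^ 2) ^ γ * (1 + x ^ 2) ^ (-γ) := by
  have key : (1 + (x - a) ^ 2)⁻¹ ≤ 2 * (1 + a ^ 2) * (1 + x ^ 2)⁻¹ := by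
    rw [← div_eq_mul_inv, inv_le_iff_one_le_mul₀ (by positivity), div_mul_eq_mul_div,
      le_div_iff₀ (by positivity)]
    nlinarith [sq_nonneg (x + a), sq_nonneg (a * (x - a) - 1), sq_nonneg (x - 2 * a)]
  calc (1 + (x - a) ^ 2) ^ (-γ) = ((1 + (x - a) ^ 2)⁻¹) ^ γ := by
        rw [rpow_neg (by positivity), inv_rpow (by positivity)]
    _ ≤ (2 * (1 + a ^ 2) * (1 + x ^ 2)⁻¹) ^ γ := rpow_le_rpow (by positivity) key hγ
    _ = 2 ^ γ * (1 + a ^ 2) ^ γ * (1 + x ^ 2) ^ (-γ) := by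
        rw [mul_rpow (by positivity) (by positivity), mul_rpow (by positivity) (by positivity),
          inv_rpow (by positivity), rpow_neg (by positivity)]

lemma integrable_exp_neg_abs_mul_one_add_sq_rpow {γ : ℝ} (hγ : 0 ≤ γ) :
    Integrable fun u : ℝ => exp (-|u|) * (1 + u ^ 2) ^ γ := by
  obtain ⟨c, -, hc⟩ := one_add_sq_rpow_le_mul_exp_abs (p := γ + 1) (by linarith) one_pos
  refine (integrable_inv_one_add_sq.const_mul c).mono' (by fun_prop)
    (Filter.Eventually.of_forall fun u => ?_)
  have hu : (0 : ℝ) < 1 + u ^ 2 := by positivity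
  rw [norm_of_nonneg (by positivity), ← mul_le_mul_iff_of_pos_right hu, mul_assoc,
    ← rpow_add_one hu.ne', mul_assoc, inv_mul_cancel₀ hu.ne', mul_one, ← le_div_iff₀' (exp_pos _),
    exp_neg, div_inv_eq_mul]
  simpa using hc u

lemma exists_exp_mul_one_add_sq_sub_rpow_neg_le {ν₀ γ : ℝ} (hν₀ : 0 < ν₀) (hγ : 0 ≤ γ) :
    ∃ E > 0, ∀ τ V r a x : ℝ, 0 ≤ τ → ν₀ * (1 + V) ≤ r → |a| ≤ V * τ →
      exp (-r * τ) * (1 + (x - a) ^ 2) ^ (-γ) ≤ E * exp (-ν₀ * τ) * (1 + x ^ 2) ^ (-γ) := by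
  obtain ⟨c, hc, hpoly⟩ := one_add_sq_rpow_le_mul_exp_abs hγ hν₀
  refine ⟨2 ^ γ * c, by positivity, fun τ V r a x hτ hr ha => ?_⟩
  -- The shift costs at most `exp (ν₀ |a|) ≤ exp (ν₀ V τ)`, paid by the damping `ν₀ (1 + V) ≤ r`.
  have hrate : -r * τ + ν₀ * |a| ≤ -ν₀ * τ := by nlinarith
  calc exp (-r * τ) * (1 + (x - a) ^ 2) ^ (-γ)
      ≤ exp (-r * τ) * (2 ^ γ * (c * exp (ν₀ * |a|)) * (1 + x ^ 2) ^ (-γ)) := by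
        gcongr
        exact (one_add_sq_sub_rpow_neg_le hγ x a).trans (by gcongr; exact hpoly a)
    _ = 2 ^ γ * c * exp (-r * τ + ν₀ * |a|) * (1 + x ^ 2) ^ (-γ) := by rw [exp_add]; ring
    _ ≤ 2 ^ γ * c * exp (-ν₀ * τ) * (1 + x ^ 2) ^ (-γ) := by gcongr

lemma exists_integral_exp_neg_abs_mul_le {γ : ℝ} (hγ : 0 ≤ γ) :
    ∃ A ≥ 0, ∀ (G : ℝ → ℝ) (c y : ℝ), (∀ z, 0 ≤ G z) →
      (∀ z, G z ≤ c * (1 + z ^ 2) ^ (-γ)) →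
      ∫ z, exp (-|y - z|) * G z ≤ A * c * (1 + y ^ 2) ^ (-γ) := by
  set φ : ℝ → ℝ := fun u => exp (-|u|) * (1 + u ^ 2) ^ γ
  have hφ : Integrable φ := integrable_exp_neg_abs_mul_one_add_sq_rpow hγ
  refine ⟨2 ^ γ * ∫ u, φ u, by positivity, fun G c y hG0 hG => ?_⟩
  have hc : 0 ≤ c := nonneg_of_mul_nonneg_left ((hG0 0).trans (hG 0)) (by positivity)
  have hpt : ∀ z, exp (-|y - z|) * G z ≤ c * 2 ^ γ * (1 + y ^ 2) ^ (-γ) * φ (y - z) := by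
    intro z
    calc exp (-|y - z|) * G z ≤ exp (-|y - z|) * (c * (1 + (y - (y - z)) ^ 2) ^ (-γ)) := by
          rw [sub_sub_cancel]; gcongr; exact hG z
      _ ≤ exp (-|y - z|) * (c * (2 ^ γ * (1 + (y - z) ^ 2) ^ γ * (1 + y ^ 2) ^ (-γ))) := by
          gcongr; exact one_add_sq_sub_rpow_neg_le hγ y (y - z)
      _ = c * 2 ^ γ * (1 + y ^ 2) ^ (-γ) * φ (y - z) := by ring
  calc ∫ z, exp (-|y - z|) * G z ≤ ∫ z, c * 2 ^ γ * (1 + y ^ 2) ^ (-γ) * φ (y - z) :=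
        integral_mono_of_nonneg (Filter.Eventually.of_forall fun z => by positivity [hG0 z])
          ((hφ.comp_sub_left y).const_mul _) (Filter.Eventually.of_forall hpt)
    _ = 2 ^ γ * (∫ u, φ u) * c * (1 + y ^ 2) ^ (-γ) := by
        rw [integral_const_mul, integral_sub_left_eq_self φ]; ring

section WeightedSup

variable {E : Type*} [NormedAddCommGroup E]

/-- The paper's `‖f‖_{L^∞_β}`; as a real `⨆` it is a junk `0` when the supremum is infinite. -/
noncomputable def weightedSup (β : ℝ) (f : E → ℝ) : ℝ := ⨆ w, (1 + ‖w‖) ^ β * |f w|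

lemma weightedSup_nonneg (β : ℝ) (f : E → ℝ) : 0 ≤ weightedSup β f :=
  Real.iSup_nonneg fun _ => by positivity

lemma weightedSup_le {β B : ℝ} {f : E → ℝ} (h : ∀ w, (1 + ‖w‖) ^ β * |f w| ≤ B) :
    weightedSup β f ≤ B :=
  ciSup_le h

lemma exists_weighted_apply_le {β γ C₀ : ℝ} (hγ : 0 ≤ γ) (hC₀ : 0 < C₀)
    {T : (ℝ → E → ℝ) → ℝ → E → ℝ}
    (hT : ∀ h x v, (1 + ‖v‖) ^ β * |T h x v|
      ≤ C₀ * (weightedSup β (h x) + ∫ y, exp (-|x - y|) * weightedSup β (h y))) :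
    ∃ K > 0, ∀ (h : ℝ → E → ℝ) (c : ℝ), (∀ z w, (1 + ‖w‖) ^ β * |h z w| ≤ c * (1 + z ^ 2) ^ (-γ)) →
      ∀ x v, (1 + ‖v‖) ^ β * |T h x v| ≤ K * c * (1 + x ^ 2) ^ (-γ) := by
  obtain ⟨A, hA, hconv⟩ := exists_integral_exp_neg_abs_mul_le hγ
  refine ⟨C₀ * (1 + A), by positivity, fun h c hh x v => ?_⟩
  have hsup : ∀ z, weightedSup β (h z) ≤ c * (1 + z ^ 2) ^ (-γ) := fun z => weightedSup_le (hh z)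
  calc (1 + ‖v‖) ^ β * |T h x v|
      ≤ C₀ * (c * (1 + x ^ 2) ^ (-γ) + A * c * (1 + x ^ 2) ^ (-γ)) := by
        refine (hT h x v).trans ?_
        gcongr
        · exact hsup x
        · exact hconv _ c x (fun z => weightedSup_nonneg β (h z)) hsup
    _ = C₀ * (1 + A) * c * (1 + x ^ 2) ^ (-γ) := by ring

end WeightedSup

lemma abs_mul_intervalIntegral_le {w t M : ℝ} {F : ℝ → ℝ} (hw : 0 ≤ w) (ht : 0 ≤ t)
    (hF : ∀ s ∈ Set.Ioc 0 t, w * |F s| ≤ M) : w * |∫ s in (0 : ℝ)..t, F s| ≤ M * t := by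
  have h := intervalIntegral.norm_integral_le_of_norm_le_const (a := 0) (b := t)
    (f := fun s => w * F s) fun s hs => by
      rw [Set.uIoc_of_le ht] at hs
      simpa only [Real.norm_eq_abs, abs_mul, abs_of_nonneg hw] using hF s hs
  calc w * |∫ s in (0 : ℝ)..t, F s| = ‖∫ s in (0 : ℝ)..t, w * F s‖ := by
        rw [intervalIntegral.integral_const_mul, Real.norm_eq_abs, abs_mul, abs_of_nonneg hw]
    _ ≤ M * |t - 0| := h
    _ = M * t := by rw [sub_zero, abs_of_nonneg ht]

section Transport

variable {ι : Type*} [Fintype ι] {β γ ν₀ : ℝ} {ν : EuclideanSpace ℝ ι → ℝ}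

lemma exists_weighted_exp_mul_le (i : ι) (hν₀ : 0 < ν₀) (hγ : 0 ≤ γ)
    (hν : ∀ v, ν₀ * (1 + ‖v‖) ≤ ν v) :
    ∃ E > 0, ∀ τ ≥ (0 : ℝ), ∀ x v (f c : ℝ),
      (1 + ‖v‖) ^ β * |f| ≤ c * (1 + (x - v i * τ) ^ 2) ^ (-γ) →
      (1 + ‖v‖) ^ β * |exp (-ν v * τ) * f| ≤ E * c * exp (-ν₀ * τ) * (1 + x ^ 2) ^ (-γ) := by
  obtain ⟨E, hE, hshift⟩ := exists_exp_mul_one_add_sq_sub_rpow_neg_le hν₀ hγ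
  refine ⟨E, hE, fun τ hτ x v f c hf => ?_⟩
  have hc : 0 ≤ c :=
    nonneg_of_mul_nonneg_left ((mul_nonneg (by positivity) (abs_nonneg f)).trans hf) (by positivity)
  have hdisp : |v i * τ| ≤ ‖v‖ * τ := by
    rw [abs_mul, abs_of_nonneg hτ, ← Real.norm_eq_abs]
    exact mul_le_mul_of_nonneg_right (PiLp.norm_apply_le v i) hτ
  calc (1 + ‖v‖) ^ β * |exp (-ν v * τ) * f| = exp (-ν v * τ) * ((1 + ‖v‖) ^ β * |f|) := by
        rw [abs_mul, abs_of_pos (exp_pos _)]; ring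
    _ ≤ exp (-ν v * τ) * (c * (1 + (x - v i * τ) ^ 2) ^ (-γ)) := by gcongr
    _ = c * (exp (-ν v * τ) * (1 + (x - v i * τ) ^ 2) ^ (-γ)) := by ring
    _ ≤ c * (E * exp (-ν₀ * τ) * (1 + x ^ 2) ^ (-γ)) :=
        mul_le_mul_of_nonneg_left (hshift τ ‖v‖ (ν v) (v i * τ) x hτ (hν v) hdisp) hc
    _ = E * c * exp (-ν₀ * τ) * (1 + x ^ 2) ^ (-γ) := by ring

theorem iterated_duhamel_bound (i : ι) (hν₀ : 0 < ν₀) (hν : ∀ v, ν₀ * (1 + ‖v‖) ≤ ν v)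
    {g₀ : ℝ → EuclideanSpace ℝ ι → ℝ} {Cg : ℝ} (hγ : 0 ≤ γ) (hCg : 0 < Cg)
    (hg₀ : ∀ x v, (1 + ‖v‖) ^ β * |g₀ x v| ≤ Cg * (1 + x ^ 2) ^ (-γ))
    {T : (ℝ → EuclideanSpace ℝ ι → ℝ) → ℝ → EuclideanSpace ℝ ι → ℝ} {C₀ : ℝ} (hC₀ : 0 < C₀)
    (hT : ∀ h x v, (1 + ‖v‖) ^ β * |T h x v|
      ≤ C₀ * (weightedSup β (h x) + ∫ y, exp (-|x - y|) * weightedSup β (h y)))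
    {J : ℕ → ℝ → ℝ → EuclideanSpace ℝ ι → ℝ}
    (hJ0 : ∀ t x v, J 0 t x v = exp (-ν v * t) * g₀ (x - v i * t) v)
    (hJk : ∀ k t x v, J (k + 1) t x v
      = ∫ s in (0 : ℝ)..t, exp (-ν v * (t - s)) * T (J k s) (x - v i * (t - s)) v) (k : ℕ) :
    ∃ Ck > 0, ∀ t ≥ (0 : ℝ), ∀ x v,
      (1 + ‖v‖) ^ β * |J k t x v| ≤ Ck * t ^ k * exp (-ν₀ * t) * (1 + x ^ 2) ^ (-γ) := by
  obtain ⟨E, hE, htransport⟩ := exists_weighted_exp_mul_le (β := β) i hν₀ hγ hν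
  obtain ⟨K, hK, hTbound⟩ := exists_weighted_apply_le hγ hC₀ hT
  induction k with
  | zero =>
    refine ⟨E * Cg, by positivity, fun t ht x v => ?_⟩
    simpa only [hJ0, pow_zero, mul_one] using htransport t ht x v _ Cg (hg₀ _ v)
  | succ k ih =>
    obtain ⟨Ck, hCk, hk⟩ := ih
    refine ⟨E * K * Ck, by positivity, fun t ht x v => ?_⟩
    rw [hJk]
    refine (abs_mul_intervalIntegral_le
      (M := E * K * Ck * t ^ k * exp (-ν₀ * t) * (1 + x ^ 2) ^ (-γ))
      (by positivity) ht fun s ⟨hs0, hst⟩ => ?_).trans_eq (by ring)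
    calc _ ≤ E * (K * (Ck * s ^ k * exp (-ν₀ * s))) * exp (-ν₀ * (t - s)) * (1 + x ^ 2) ^ (-γ) :=
          htransport (t - s) (by linarith) x v _ _
            (hTbound _ _ (fun z w => hk s hs0.le z w) _ v)
      _ = E * K * Ck * s ^ k * (exp (-ν₀ * s) * exp (-ν₀ * (t - s))) * (1 + x ^ 2) ^ (-γ) := by
          ring
      _ = E * K * Ck * s ^ k * exp (-ν₀ * t) * (1 + x ^ 2) ^ (-γ) := by
          rw [← exp_add]; ring_nf
      _ ≤ E * K * Ck * t ^ k * exp (-ν₀ * t) * (1 + x ^ 2) ^ (-γ) := by gcongr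

end Transport

theorem stmt19_general (ν : EuclideanSpace ℝ (Fin 3) → ℝ) (ν₀ : ℝ) (hν₀ : 0 < ν₀)
    (hν : ∀ v, ν₀ * (1 + ‖v‖) ≤ ν v)
    (g₀ : ℝ → EuclideanSpace ℝ (Fin 3) → ℝ) (β γ Cg : ℝ)
    (hγ : 0 < γ) (hCg : 0 < Cg)
    (hg₀ : ∀ x : ℝ, ∀ v, (1 + ‖v‖) ^ β * |g₀ x v| ≤ Cg * (1 + x ^ 2) ^ (-γ))
    (T : (ℝ → EuclideanSpace ℝ (Fin 3) → ℝ) → ℝ → EuclideanSpace ℝ (Fin 3) → ℝ)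
    (C₀ : ℝ) (hC₀ : 0 < C₀)
    (hT : ∀ h : ℝ → EuclideanSpace ℝ (Fin 3) → ℝ, ∀ x : ℝ, ∀ v,
      (1 + ‖v‖) ^ β * |T h x v|
        ≤ C₀ * ((⨆ w, (1 + ‖w‖) ^ β * |h x w|)
            + ∫ y : ℝ, Real.exp (-|x - y|) * ⨆ w, (1 + ‖w‖) ^ β * |h y w|))
    (J : ℕ → ℝ → ℝ → EuclideanSpace ℝ (Fin 3) → ℝ)
    (hJ0 : ∀ t x v, J 0 t x v = Real.exp (-ν v * t) * g₀ (x - v 0 * t) v)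
    (hJk : ∀ k t x v, J (k + 1) t x v
      = ∫ s in (0:ℝ)..t, Real.exp (-ν v * (t - s)) * T (J k s) (x - v 0 * (t - s)) v) :
    ∀ k : ℕ, ∃ Ck > (0:ℝ), ∀ t ≥ (0:ℝ), ∀ x : ℝ, ∀ v,
      (1 + ‖v‖) ^ β * |J k t x v|
        ≤ Ck * t ^ k * Real.exp (-2 * ν₀ * t / 3) * (1 + x ^ 2) ^ (-γ) := by
  intro k
  obtain ⟨Ck, hCk, hbound⟩ :=
    iterated_duhamel_bound 0 hν₀ hν hγ.le hCg hg₀ hC₀ hT hJ0 hJk k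
  refine ⟨Ck, hCk, fun t ht x v => (hbound t ht x v).trans ?_⟩
  gcongr
  linarith [mul_nonneg hν₀.le ht]

theorem stmt19 (ν : EuclideanSpace ℝ (Fin 3) → ℝ) (ν₀ : ℝ) (hν₀ : 0 < ν₀)
    (hν : ∀ v, ν₀ * (1 + ‖v‖) ≤ ν v)
    (g₀ : ℝ → EuclideanSpace ℝ (Fin 3) → ℝ) (β γ Cg : ℝ) (hβ : 0 ≤ β)
    (hγ : 0 < γ) (hCg : 0 < Cg)
    (hg₀ : ∀ x : ℝ, ∀ v, (1 + ‖v‖) ^ β * |g₀ x v| ≤ Cg * (1 + x ^ 2) ^ (-γ))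
    (T : (ℝ → EuclideanSpace ℝ (Fin 3) → ℝ) → ℝ → EuclideanSpace ℝ (Fin 3) → ℝ)
    (C₀ : ℝ) (hC₀ : 0 < C₀)
    (hT : ∀ h : ℝ → EuclideanSpace ℝ (Fin 3) → ℝ, ∀ x : ℝ, ∀ v,
      (1 + ‖v‖) ^ β * |T h x v|
        ≤ C₀ * ((⨆ w, (1 + ‖w‖) ^ β * |h x w|)
            + ∫ y : ℝ, Real.exp (-|x - y|) * ⨆ w, (1 + ‖w‖) ^ β * |h y w|))
    (J : ℕ → ℝ → ℝ → EuclideanSpace ℝ (Fin 3) → ℝ)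
    (hJ0 : ∀ t x v, J 0 t x v = Real.exp (-ν v * t) * g₀ (x - v 0 * t) v)
    (hJk : ∀ k t x v, J (k + 1) t x v
      = ∫ s in (0:ℝ)..t, Real.exp (-ν v * (t - s)) * T (J k s) (x - v 0 * (t - s)) v) :
    ∀ k : ℕ, ∃ Ck > (0:ℝ), ∀ t ≥ (0:ℝ), ∀ x : ℝ, ∀ v,
      (1 + ‖v‖) ^ β * |J k t x v|
        ≤ Ck * t ^ k * Real.exp (-2 * ν₀ * t / 3) * (1 + x ^ 2) ^ (-γ) :=
  stmt19_general ν ν₀ hν₀ hν g₀ β γ Cg hγ hCg hg₀ T C₀ hC₀ hT J hJ0 hJk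
end
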